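/- Let F be a q-srgi map that satisfies assumption (A) and q-sgicc. If F(X) is P-bounded, then l-SWEff(F) is nonempty. -/

import Mathlib

open Pointwise

/-- The Gerstewitz scalarization function `ψ^q_P(y) = sup {t : ℝ | y ∈ t • q + P}`. -/
noncomputable def psi {Y : Type*} [AddCommGroup Y] [Module ℝ Y] (P : Set Y) (q : Y) (y : Y) : ℝ :=
  sSup {t : ℝ | y - t • q ∈ P}

/-- Assumption (A): `ψ^q_P` attains its infimum on `F(x)` for all `x`. -/
def AssumptionA {X Y : Type*} [AddCommGroup Y] [Module ℝ Y]
    (P : Set Y) (q : Y) (F : X → Set Y) : Prop :=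
  ∀ x : X, ∃ z ∈ F x, ∀ w ∈ F x, psi P q z ≤ psi P q w

/-- The colevel set of `F` at height `λ • q`:
`Colev_{<ˡ}(F, λq) = {x ∈ X : F(x) ⊄ λ • q + int P}`. -/
def Colev {X Y : Type*} [AddCommGroup Y] [Module ℝ Y] [TopologicalSpace Y]
    (P : Set Y) (q : Y) (F : X → Set Y) (lam : ℝ) : Set X :=
  {x | ¬ F x ⊆ {y : Y | y - lam • q ∈ interior P}}

/-- `M_F^q = sup {t ∈ ℝ : F(X) ⊆ t • q + P} ∈ ℝ ∪ {±∞}` (with `sup ∅ = -∞`). -/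
noncomputable def Mq {X Y : Type*} [AddCommGroup Y] [Module ℝ Y]
    (P : Set Y) (q : Y) (F : X → Set Y) : EReal :=
  sSup ((fun t : ℝ => (t : EReal)) '' {t : ℝ | ∀ x : X, ∀ z ∈ F x, z - t • q ∈ P})

/-- `F` is `q`-srgi: if `λ > M_F^q` and `x₀ ∉ Colev_{<ˡ}(F, λq)`, then there exist a
neighborhood `U` of `x₀` and a real `r > M_F^q` with `U ∩ Colev_{<ˡ}(F, rq) = ∅`. -/
def Srgi {X Y : Type*} [TopologicalSpace X] [AddCommGroup Y] [Module ℝ Y] [TopologicalSpace Y]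
    (P : Set Y) (q : Y) (F : X → Set Y) : Prop :=
  ∀ lam : ℝ, Mq P q F < (lam : EReal) → ∀ x₀ : X, x₀ ∉ Colev P q F lam →
    ∃ U ∈ nhds x₀, ∃ r : ℝ, Mq P q F < (r : EReal) ∧ U ∩ Colev P q F r = ∅

/-- `x̄` is a strict weakly `l`-efficient solution of (SOP). -/
def SWEff {X Y : Type*} [AddCommGroup Y] [Module ℝ Y] [TopologicalSpace Y]
    (P : Set Y) (F : X → Set Y) (xbar : X) : Prop :=
  ¬ ∃ x : X, x ≠ xbar ∧ F xbar ⊆ F x + interior P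

/-- `F` satisfies `q`-sgicc: there is a real `λ > M_F^q` such that `Colev_{<ˡ}(F, λq)`
is relatively compact. -/
def Sgicc {X Y : Type*} [TopologicalSpace X] [AddCommGroup Y] [Module ℝ Y] [TopologicalSpace Y]
    (P : Set Y) (q : Y) (F : X → Set Y) : Prop :=
  ∃ lam : ℝ, Mq P q F < (lam : EReal) ∧ IsCompact (closure (Colev P q F lam))

/-- A set `A ⊆ Y` is `P`-bounded if for every neighborhood `U` of `0` there is `r > 0`
with `A ⊆ r • U + P`. -/
def PBounded {Y : Type*} [AddCommGroup Y] [Module ℝ Y] [TopologicalSpace Y]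
    (P : Set Y) (A : Set Y) : Prop :=
  ∀ U ∈ nhds (0 : Y), ∃ r : ℝ, 0 < r ∧ A ⊆ r • U + P


/-!
Because `q ∈ int P`, for every `y` one has `y - t • q ∈ P` exactly when `t ≤ ψ(y)`, and
`y - t • q ∈ int P` exactly when `t < ψ(y)`. With `m x := min_{z ∈ F x} ψ(z)` (assumption (A)),
the colevel sets of `F` are therefore the sublevel sets `{m ≤ λ}` and `M_F^q = inf m`, so `q`-srgi
says that near a point which does not minimise `m`, `m` stays above a level `r > inf m`. Finitely
many such neighbourhoods cover the compact closure of a colevel set (`q`-sgicc), which bounds `m`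
from below by a level above `inf m` everywhere: `m` attains its infimum. A minimiser `x̄` is
strictly weakly efficient, since `F x̄ ⊆ F x + int P` would give `m x < m x̄`.
-/

open Set Filter Topology

section InteriorPoint

variable {Y : Type*} [AddCommGroup Y] [Module ℝ Y] [TopologicalSpace Y] [ContinuousAdd Y]
  [ContinuousSMul ℝ Y] {s : Set Y} {p : Y}

lemma eventually_add_smul_mem_of_mem_interior (hp : p ∈ interior s) (v : Y) :
    ∀ᶠ ε in 𝓝 (0 : ℝ), p + ε • v ∈ s :=
  (Continuous.tendsto' (by fun_prop) 0 p (by simp)).eventually (mem_interior_iff_mem_nhds.1 hp)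

lemma exists_pos_add_smul_mem_of_mem_interior (hp : p ∈ interior s) (v : Y) :
    ∃ ε : ℝ, 0 < ε ∧ p + ε • v ∈ s :=
  (eventually_add_smul_mem_of_mem_interior hp v).exists_gt

end InteriorPoint

theorem exists_forall_le_of_isCompact_closure_sublevel {X : Type*} [TopologicalSpace X]
    {m : X → ℝ}
    (hloc : ∀ x, ⨅ y, (m y : EReal) < m x →
      ∃ U ∈ 𝓝 x, ∃ r : ℝ, ⨅ y, (m y : EReal) < r ∧ ∀ y ∈ U, r < m y)
    (hcpt : ∃ lam : ℝ, ⨅ y, (m y : EReal) < lam ∧ IsCompact (closure {x | m x ≤ lam})) :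
    ∃ x, ∀ y, m x ≤ m y := by
  set M := ⨅ y, (m y : EReal)
  by_contra! hnomin
  have hM : ∀ x, M < m x := fun x =>
    let ⟨y, hy⟩ := hnomin x
    (iInf_le _ y).trans_lt (EReal.coe_lt_coe_iff.2 hy)
  obtain ⟨lam, hlam, hK⟩ := hcpt
  -- having a lower bound `r > M` for `m` on a set is a local property stable under finite unions
  obtain ⟨r, hr, hrK⟩ : ∃ r : ℝ, M < r ∧ ∀ y ∈ closure {x | m x ≤ lam}, r ≤ m y := by
    refine hK.induction_on ⟨lam, hlam, by simp⟩
      (fun s t hst ⟨r, hr, ht⟩ => ⟨r, hr, fun y hy => ht y (hst hy)⟩)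
      (fun s t ⟨r, hr, hs⟩ ⟨r', hr', ht⟩ => ⟨min r r', ?_, ?_⟩) (fun x _ => ?_)
    · rw [EReal.coe_strictMono.monotone.map_min]
      exact lt_min hr hr'
    · rintro y (hy | hy)
      · exact (min_le_left _ _).trans (hs y hy)
      · exact (min_le_right _ _).trans (ht y hy)
    · obtain ⟨U, hU, r, hr, hUr⟩ := hloc x (hM x)
      exact ⟨U, mem_nhdsWithin_of_mem_nhds hU, r, hr, fun y hy => (hUr y hy).le⟩
  have hle : ((min r lam : ℝ) : EReal) ≤ M := by
    refine le_iInf fun y => EReal.coe_le_coe_iff.2 ?_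
    by_cases hy : m y ≤ lam
    · exact (min_le_left _ _).trans (hrK y (subset_closure hy))
    · exact (min_le_right _ _).trans (not_le.1 hy).le
  rw [EReal.coe_strictMono.monotone.map_min] at hle
  exact hle.not_gt (lt_min hr hlam)

namespace ConvexCone

variable {Y : Type*} [AddCommGroup Y] [Module ℝ Y]

def ofConvex {P : Set Y} (hconv : Convex ℝ P) (hsmul : ∀ c : ℝ, 0 < c → ∀ y ∈ P, c • y ∈ P) :
    ConvexCone ℝ Y where
  carrier := P
  smul_mem' c hc y hy := hsmul c hc y hy
  add_mem' a ha b hb := by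
    have hmid := hconv ha hb (by norm_num : (0 : ℝ) ≤ 1 / 2) (by norm_num : (0 : ℝ) ≤ 1 / 2)
      (by norm_num)
    convert hsmul 2 two_pos _ hmid using 1
    module

variable [TopologicalSpace Y] {C : ConvexCone ℝ Y}

lemma add_mem_interior [IsTopologicalAddGroup Y] {p b : Y} (hp : p ∈ interior (C : Set Y))
    (hb : b ∈ C) : p + b ∈ interior (C : Set Y) :=
  interior_maximal (by rintro _ ⟨u, hu, v, hv, rfl⟩; exact C.add_mem (interior_subset hu) hv)
    isOpen_interior.add_right (add_mem_add hp hb)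

lemma smul_mem_interior [ContinuousConstSMul ℝ Y] {c : ℝ} (hc : 0 < c) {p : Y}
    (hp : p ∈ interior (C : Set Y)) : c • p ∈ interior (C : Set Y) := by
  have hsub : c • (C : Set Y) ⊆ C := by rintro _ ⟨y, hy, rfl⟩; exact C.smul_mem hc hy
  exact interior_mono hsub (by rw [interior_smul₀ hc.ne']; exact smul_mem_smul_set hp)

end ConvexCone

lemma IsLeast.le_iff_forall_le_image {α β : Type*} [Preorder β] {f : α → β} {s : Set α} {a b : β}
    (h : IsLeast (f '' s) a) : b ≤ a ↔ ∀ x ∈ s, b ≤ f x := by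
  rw [le_isGLB_iff h.isGLB, mem_lowerBounds, forall_mem_image]

section Scalarization

variable {Y : Type*} [AddCommGroup Y] [Module ℝ Y] [TopologicalSpace Y] [IsTopologicalAddGroup Y]
  [ContinuousSMul ℝ Y] {C : ConvexCone ℝ Y} {q : Y}

lemma nonempty_setOf_sub_smul_mem (hq : q ∈ interior (C : Set Y)) (z : Y) :
    {t : ℝ | z - t • q ∈ C}.Nonempty := by
  obtain ⟨ε, hε, hmem⟩ := exists_pos_add_smul_mem_of_mem_interior hq z
  refine ⟨-ε⁻¹, show z - (-ε⁻¹) • q ∈ C from ?_⟩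
  convert C.smul_mem (inv_pos.2 hε) hmem using 1
  rw [smul_add, smul_smul, inv_mul_cancel₀ hε.ne', one_smul, neg_smul, sub_neg_eq_add, add_comm]

lemma bddAbove_setOf_sub_smul_mem (hC : IsClosed (C : Set Y)) (hq : q ∈ interior (C : Set Y))
    (hCuniv : (C : Set Y) ≠ univ) (z : Y) : BddAbove {t : ℝ | z - t • q ∈ C} := by
  by_contra hunbdd
  have hfreq : ∃ᶠ t : ℝ in atTop, t⁻¹ • z - q ∈ C := by
    rw [frequently_atTop]
    intro a
    obtain ⟨t, ht, hat⟩ := not_bddAbove_iff.1 hunbdd (max a 0)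
    have htpos : 0 < t := (le_max_right a 0).trans_lt hat
    refine ⟨t, (le_max_left a 0).trans hat.le, ?_⟩
    convert C.smul_mem (inv_pos.2 htpos) ht using 1
    rw [smul_sub, smul_smul, inv_mul_cancel₀ htpos.ne', one_smul]
  have hlim : Tendsto (fun t : ℝ => t⁻¹ • z - q) atTop (𝓝 (-q)) := by
    simpa using ((tendsto_inv_atTop_zero (𝕜 := ℝ)).smul_const z).sub_const q
  have hnegq : -q ∈ C := hC.mem_of_frequently_of_tendsto hfreq hlim
  refine hCuniv (eq_univ_of_forall fun y => ?_)
  obtain ⟨ε, hε, hmem⟩ := exists_pos_add_smul_mem_of_mem_interior hq y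
  have hεy := C.add_mem hmem hnegq
  rw [add_neg_cancel_comm] at hεy
  exact (C.smul_mem_iff hε).1 hεy

variable (hC : IsClosed (C : Set Y)) (hq : q ∈ interior (C : Set Y)) (hCuniv : (C : Set Y) ≠ univ)
include hC hq hCuniv

lemma sub_psi_smul_mem (z : Y) : z - psi C q z • q ∈ C :=
  (hC.preimage (by fun_prop : Continuous fun t : ℝ => z - t • q)).csSup_mem
    (nonempty_setOf_sub_smul_mem hq z) (bddAbove_setOf_sub_smul_mem hC hq hCuniv z)

lemma le_psi_iff {z : Y} {t : ℝ} : t ≤ psi C q z ↔ z - t • q ∈ C := by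
  refine ⟨fun ht => ?_, fun ht => le_csSup (bddAbove_setOf_sub_smul_mem hC hq hCuniv z) ht⟩
  rcases ht.lt_or_eq with ht | rfl
  · have hsplit : z - t • q = (psi C q z - t) • q + (z - psi C q z • q) := by module
    rw [hsplit]
    exact C.add_mem (C.smul_mem (sub_pos.2 ht) (interior_subset hq))
      (sub_psi_smul_mem hC hq hCuniv z)
  · exact sub_psi_smul_mem hC hq hCuniv z

lemma lt_psi_iff {z : Y} {t : ℝ} : t < psi C q z ↔ z - t • q ∈ interior (C : Set Y) := by
  constructor
  · intro ht
    have hsplit : z - t • q = (psi C q z - t) • q + (z - psi C q z • q) := by module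
    rw [hsplit]
    exact C.add_mem_interior (C.smul_mem_interior (sub_pos.2 ht) hq)
      (sub_psi_smul_mem hC hq hCuniv z)
  · intro ht
    obtain ⟨ε, hε, hmem⟩ := exists_pos_add_smul_mem_of_mem_interior ht (-q)
    have hshift : z - (t + ε) • q = z - t • q + ε • -q := by module
    have hle : t + ε ≤ psi C q z := (le_psi_iff hC hq hCuniv).2 (hshift ▸ hmem)
    linarith

lemma psi_lt_psi_of_sub_mem_interior {y w : Y} (h : y - w ∈ interior (C : Set Y)) :
    psi C q w < psi C q y := by
  refine (lt_psi_iff hC hq hCuniv).2 ?_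
  convert C.add_mem_interior h (sub_psi_smul_mem hC hq hCuniv w) using 1
  abel

variable {X : Type*} (F : X → Set Y) {m : X → ℝ} (hm : ∀ x, IsLeast (psi C q '' F x) (m x))
include hm

lemma colev_eq_setOf_le (lam : ℝ) : Colev C q F lam = {x | m x ≤ lam} := by
  ext x
  simp only [Colev, mem_ofPred_eq, subset_def, ← lt_psi_iff hC hq hCuniv, not_forall, not_lt,
    exists_prop]
  obtain ⟨⟨z, hz, hzm⟩, hmin⟩ := hm x
  exact ⟨fun ⟨w, hw, hle⟩ => (hmin (mem_image_of_mem _ hw)).trans hle, fun h => ⟨z, hz, hzm ▸ h⟩⟩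

lemma mq_eq_iInf : Mq C q F = ⨅ x, (m x : EReal) := by
  have hset : {t : ℝ | ∀ x, ∀ z ∈ F x, z - t • q ∈ (C : Set Y)} = {t | ∀ x, t ≤ m x} := by
    ext t
    simp only [mem_ofPred_eq, SetLike.mem_coe, ← le_psi_iff hC hq hCuniv,
      ← (hm _).le_iff_forall_le_image]
  rw [Mq, hset]
  refine le_antisymm (sSup_le ?_) (le_of_forall_lt fun c hc => ?_)
  · rintro _ ⟨t, ht, rfl⟩
    exact le_iInf fun x => EReal.coe_le_coe_iff.2 (ht x)
  · obtain ⟨t, hct, htlt⟩ := EReal.lt_iff_exists_real_btwn.1 hc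
    have ht : ∀ x, t ≤ m x := fun x => EReal.coe_le_coe_iff.1 (htlt.le.trans (iInf_le _ x))
    exact hct.trans_le (le_sSup ⟨t, ht, rfl⟩)

lemma sweff_of_forall_le {xbar : X} (hxbar : ∀ x, m xbar ≤ m x) : SWEff C F xbar := by
  rintro ⟨x, -, hsub⟩
  obtain ⟨⟨z, hz, hzm⟩, -⟩ := hm xbar
  obtain ⟨w, hw, p, hp, rfl⟩ := hsub hz
  have hlt : psi C q w < psi C q (w + p) :=
    psi_lt_psi_of_sub_mem_interior hC hq hCuniv (by rwa [add_sub_cancel_left])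
  have hmx : m x ≤ psi C q w := (hm x).2 (mem_image_of_mem _ hw)
  linarith [hxbar x]

variable [TopologicalSpace X]

lemma Srgi.exists_mem_nhds_forall_lt (hsrgi : Srgi C q F) {x : X}
    (hx : ⨅ y, (m y : EReal) < m x) :
    ∃ U ∈ 𝓝 x, ∃ r : ℝ, ⨅ y, (m y : EReal) < r ∧ ∀ y ∈ U, r < m y := by
  have hcolev := colev_eq_setOf_le hC hq hCuniv F hm
  rw [← mq_eq_iInf hC hq hCuniv F hm] at hx ⊢
  obtain ⟨lam, hlam, hlamx⟩ := EReal.lt_iff_exists_real_btwn.1 hx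
  have hx' : x ∉ Colev C q F lam := by
    rw [hcolev]
    exact not_le.2 (EReal.coe_lt_coe_iff.1 hlamx)
  obtain ⟨U, hU, r, hr, hdisj⟩ := hsrgi lam hlam x hx'
  refine ⟨U, hU, r, hr, fun y hy => not_le.1 fun hle => ?_⟩
  exact (eq_empty_iff_forall_notMem.1 hdisj) y ⟨hy, by rw [hcolev]; exact hle⟩

lemma Sgicc.exists_isCompact_closure_sublevel (hcoer : Sgicc C q F) :
    ∃ lam : ℝ, ⨅ y, (m y : EReal) < lam ∧ IsCompact (closure {x | m x ≤ lam}) := by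
  simpa only [Sgicc, mq_eq_iInf hC hq hCuniv F hm, colev_eq_setOf_le hC hq hCuniv F hm] using hcoer

end Scalarization

theorem stmt14_general {X Y : Type*} [TopologicalSpace X]
    [AddCommGroup Y] [Module ℝ Y] [TopologicalSpace Y]
    [IsTopologicalAddGroup Y] [ContinuousSMul ℝ Y]
    (P : Set Y) (hPclosed : IsClosed P) (hPconv : Convex ℝ P)
    (hPcone : ∀ c : ℝ, 0 < c → ∀ y ∈ P, c • y ∈ P)
    (hPuniv : P ≠ Set.univ)
    (q : Y) (hq : q ∈ interior P)
    (F : X → Set Y)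
    (hsrgi : Srgi P q F) (hA : AssumptionA P q F) (hcoer : Sgicc P q F) :
    ∃ xbar : X, SWEff P F xbar := by
  let C : ConvexCone ℝ Y := .ofConvex hPconv hPcone
  have hleast : ∀ x, ∃ μ, IsLeast (psi P q '' F x) μ := fun x =>
    let ⟨z, hz, hmin⟩ := hA x
    ⟨psi P q z, mem_image_of_mem _ hz, forall_mem_image.2 hmin⟩
  choose m hm using hleast
  obtain ⟨xbar, hxbar⟩ := exists_forall_le_of_isCompact_closure_sublevel
    (fun _ hx => hsrgi.exists_mem_nhds_forall_lt (C := C) hPclosed hq hPuniv F hm hx)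
    (hcoer.exists_isCompact_closure_sublevel (C := C) hPclosed hq hPuniv F hm)
  exact ⟨xbar, sweff_of_forall_le (C := C) hPclosed hq hPuniv F hm hxbar⟩

/-- If `F` is `q`-srgi, satisfies assumption (A) and `q`-sgicc, and `F(X)` is
`P`-bounded, then `l-SWEff(F)` is nonempty. -/
theorem stmt14 {X Y : Type*} [TopologicalSpace X] [T2Space X]
    [AddCommGroup Y] [Module ℝ Y] [TopologicalSpace Y]
    [IsTopologicalAddGroup Y] [ContinuousSMul ℝ Y] [T2Space Y]
    (P : Set Y) (hPclosed : IsClosed P) (hPconv : Convex ℝ P)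
    (hP0 : (0 : Y) ∈ P) (hPcone : ∀ c : ℝ, 0 < c → ∀ y ∈ P, c • y ∈ P)
    (hPne : P ≠ {0}) (hPuniv : P ≠ Set.univ)
    (q : Y) (hq : q ∈ interior P)
    (F : X → Set Y) (hF : ∀ x, (F x).Nonempty)
    (hsrgi : Srgi P q F) (hA : AssumptionA P q F) (hcoer : Sgicc P q F)
    (hbdd : PBounded P (⋃ x : X, F x)) :
    ∃ xbar : X, SWEff P F xbar :=
  stmt14_general P hPclosed hPconv hPcone hPuniv q hq F hsrgi hA hcoer
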